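/- Let F be a field, n ≥ 3 an integer, and R = F[X,Y]/(Xⁿ, Yⁿ, XY), a local Artinian ring with maximal ideal M = Rx ⊕ Ry where x, y are the images of X, Y. Let z = x + y. Then Ann(z) = Rx^{n-1} ⊕ Ry^{n-1}, and the ring R/Ann(z) is not a principal ideal ring. -/

import Mathlib

/-!
Write `Iₘ = (Xᵐ, Yᵐ, XY)`. It is a monomial ideal, so membership in `Iₘ` only depends on the
coefficients of the pure powers `Xᵏ`, `Yᵏ` with `k < m`, and multiplying by `X + Y` shifts these
coefficients up by one degree. Hence the preimage of `Ann(x + y)` in `F[X,Y]` is `I_{n-1}`, which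
gives `Ann(z) = (x^{n-1}, y^{n-1})`, and the same coefficients separate `Rx^{n-1}` from
`Ry^{n-1}`. For `n ≥ 3` we have `I_{n-1} ⊆ (X, Y)²`, so `R/Ann(z)` surjects onto the ring of
first-order jets `F ⊕ F²` (with `F²` squaring to zero); there the maximal ideal `F²` is not
principal, because the multiples of a single element of it form a line.
-/

open MvPolynomial Finsupp TrivSqZeroExt

namespace TrivSqZeroExt

variable {A σ : Type*} [CommRing A]

theorem not_isPrincipalIdealRing_pi [Nontrivial A] [Nontrivial σ] :
    ¬ IsPrincipalIdealRing (TrivSqZeroExt A (σ → A)) := by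
  classical
  intro h
  obtain ⟨i, j, hij⟩ := exists_pair_ne σ
  obtain ⟨g, hg⟩ := (h.principal (RingHom.ker (fstHom A A (σ → A)))).principal
  have hg0 : g.fst = 0 := by
    have : g ∈ RingHom.ker (fstHom A A (σ → A)) := hg ▸ Ideal.mem_span_singleton_self g
    simpa using this
  have hspan (v : σ → A) : ∃ a : A, v = a • g.snd := by
    have : inr v ∈ RingHom.ker (fstHom A A (σ → A)) := by simp
    rw [hg, Ideal.mem_span_singleton'] at this
    obtain ⟨r, hr⟩ := this
    exact ⟨r.fst, by simpa [hg0] using congrArg snd hr.symm⟩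
  obtain ⟨a, ha⟩ := hspan (Pi.single i 1)
  obtain ⟨b, hb⟩ := hspan (Pi.single j 1)
  have hai : 1 = a * g.snd i := by simpa using congrFun ha i
  have hbi : 0 = b * g.snd i := by simpa [hij] using congrFun hb i
  have hbj : 1 = b * g.snd j := by simpa using congrFun hb j
  have hb0 : b = 0 := by
    calc b = b * (a * g.snd i) := by rw [← hai, mul_one]
      _ = a * (b * g.snd i) := by ring
      _ = 0 := by rw [← hbi, mul_zero]
  simp [hb0] at hbj

end TrivSqZeroExt

theorem Finsupp.exists_axes_exponent_le_iff {m : ℕ} {s : Fin 2 →₀ ℕ} :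
    (∃ t ∈ ({single 0 m, single 1 m, single 0 1 + single 1 1} : Set (Fin 2 →₀ ℕ)), t ≤ s) ↔
      ∀ i k, s = single i k → m ≤ k := by
  simp only [Set.mem_insert_iff, Set.mem_singleton_iff, exists_eq_or_imp, exists_eq_left]
  simp [Finsupp.le_def, Fin.forall_fin_two, Finsupp.ext_iff]
  omega

namespace MvPolynomial

section CommSemiring

variable {A : Type*} [CommSemiring A]

variable (A) in
noncomputable def axesIdeal (m : ℕ) :
    Ideal (MvPolynomial (Fin 2) A) :=
  Ideal.span {X 0 ^ m, X 1 ^ m, X 0 * X 1}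

theorem axesIdeal_eq_span_monomial (m : ℕ) :
    axesIdeal A m = Ideal.span ((fun s => monomial s (1 : A)) ''
      {single 0 m, single 1 m, single 0 1 + single 1 1}) := by
  simp [axesIdeal, Set.image_insert_eq, X_pow_eq_monomial, ← X_pow_eq_monomial (e := 1),
    monomial_add_single]

theorem mem_axesIdeal_iff {m : ℕ} {p : MvPolynomial (Fin 2) A} :
    p ∈ axesIdeal A m ↔ ∀ i k, k < m → coeff (single i k) p = 0 := by
  simp only [axesIdeal_eq_span_monomial, mem_ideal_span_monomial_image,
    Finsupp.exists_axes_exponent_le_iff]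
  constructor
  · intro h i k hk
    by_contra hne
    exact hk.not_ge (h _ (mem_support_iff.mpr hne) i k rfl)
  · rintro h s hs i k rfl
    by_contra! hk
    exact mem_support_iff.mp hs (h i k hk)

theorem coeff_single_succ_mul_sum_X {σ : Type*} [Fintype σ] (p : MvPolynomial σ A) (i : σ)
    (k : ℕ) : coeff (single i (k + 1)) (p * ∑ j, X j) = coeff (single i k) p := by
  classical
  rw [Finset.mul_sum, coeff_sum, Finset.sum_eq_single i]
  · rw [single_add, coeff_mul_X]
  · intro j _ hji
    rw [coeff_mul_X', if_neg (by simp [hji])]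
  · simp

theorem coeff_single_mul_X_pow_of_ne {σ : Type*} {i j : σ} (hij : i ≠ j) {e : ℕ} (he : e ≠ 0)
    (k : ℕ) (p : MvPolynomial σ A) : coeff (single i k) (p * X j ^ e) = 0 := by
  classical
  rw [X_pow_eq_monomial, coeff_mul_monomial', if_neg]
  rw [single_le_iff, single_apply, if_neg hij]
  omega

theorem mul_X_add_X_mem_axesIdeal_succ_iff {m : ℕ} {p : MvPolynomial (Fin 2) A} :
    p * (X 0 + X 1) ∈ axesIdeal A (m + 1) ↔ p ∈ axesIdeal A m := by
  have hsum : (X 0 + X 1 : MvPolynomial (Fin 2) A) = ∑ j, X j := (Fin.sum_univ_two _).symm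
  simp only [mem_axesIdeal_iff, Nat.forall_lt_succ_left, hsum, coeff_single_succ_mul_sum_X,
    single_zero, ← constantCoeff_eq, map_mul, map_sum, constantCoeff_X, Finset.sum_const_zero,
    mul_zero, true_and]

end CommSemiring

section CommRing

variable {A : Type*} [CommRing A]

theorem mul_X_pow_mem_axesIdeal_of_sub_mem {m e : ℕ} (he : e ≠ 0) {P Q : MvPolynomial (Fin 2) A}
    (h : P * X 0 ^ e - Q * X 1 ^ e ∈ axesIdeal A m) : P * X 0 ^ e ∈ axesIdeal A m := by
  rw [mem_axesIdeal_iff] at h ⊢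
  intro i k hk
  fin_cases i
  · simpa [coeff_single_mul_X_pow_of_ne zero_ne_one he] using h 0 k hk
  · exact coeff_single_mul_X_pow_of_ne one_ne_zero he k P

variable {σ : Type*} [DecidableEq σ]

variable (σ A) in
/-- `p ↦ (p(0), ((∂p/∂Xᵢ)(0))ᵢ)` -/
noncomputable def firstOrderJet : MvPolynomial σ A →ₐ[A] TrivSqZeroExt A (σ → A) :=
  aeval fun i => inr (Pi.single i 1)

theorem firstOrderJet_X_mul_X (i j : σ) : firstOrderJet A σ (X i * X j) = 0 := by
  simp [firstOrderJet]

theorem firstOrderJet_surjective [Fintype σ] : Function.Surjective (firstOrderJet A σ) := by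
  intro x
  refine ⟨C x.fst + ∑ i, C (x.snd i) * X i, ?_⟩
  ext <;> simp [firstOrderJet, algebraMap_eq_inl, fst_sum, snd_sum, Pi.single_apply]

theorem axesIdeal_le_ker_firstOrderJet {m : ℕ} (hm : 2 ≤ m) :
    axesIdeal A m ≤ RingHom.ker (firstOrderJet A (Fin 2)) := by
  obtain ⟨k, rfl⟩ := Nat.exists_eq_add_of_le' hm
  rw [axesIdeal, Ideal.span_le]
  rintro p (rfl | rfl | rfl) <;> simp [pow_succ, mul_assoc, firstOrderJet_X_mul_X]

end CommRing

end MvPolynomial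

section

variable {A R : Type*} [CommRing A] [CommRing R] {f : MvPolynomial (Fin 2) A →+* R} {m : ℕ}

theorem comap_torsionOf_X_add_X (hker : RingHom.ker f = axesIdeal A (m + 1)) :
    Ideal.comap f (Ideal.torsionOf R R (f (X 0) + f (X 1))) = axesIdeal A m := by
  ext p
  rw [Ideal.mem_comap, Ideal.mem_torsionOf_iff, smul_eq_mul, ← map_add, ← map_mul,
    ← RingHom.mem_ker, hker, mul_X_add_X_mem_axesIdeal_succ_iff]

theorem torsionOf_X_add_X (hf : Function.Surjective f)
    (hker : RingHom.ker f = axesIdeal A (m + 1)) :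
    Ideal.torsionOf R R (f (X 0) + f (X 1)) =
      Submodule.span R {f (X 0) ^ m} ⊔ Submodule.span R {f (X 1) ^ m} := by
  have hxy : f (X 0 * X 1) = 0 := by
    rw [← RingHom.mem_ker, hker]
    exact Ideal.subset_span (by simp)
  rw [← Ideal.map_comap_of_surjective f hf (Ideal.torsionOf R R _), comap_torsionOf_X_add_X hker,
    axesIdeal, Ideal.map_span]
  simp [Set.image_insert_eq, hxy, Ideal.span_insert]

theorem disjoint_span_X_pow (hf : Function.Surjective f)
    (hker : RingHom.ker f = axesIdeal A (m + 1)) (hm : m ≠ 0) :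
    Disjoint (Submodule.span R {f (X 0) ^ m}) (Submodule.span R {f (X 1) ^ m}) := by
  rw [Submodule.disjoint_def]
  intro r hr0 hr1
  obtain ⟨a, rfl⟩ := Submodule.mem_span_singleton.mp hr0
  obtain ⟨b, hb⟩ := Submodule.mem_span_singleton.mp hr1
  obtain ⟨P, rfl⟩ := hf a
  obtain ⟨Q, rfl⟩ := hf b
  simp only [smul_eq_mul, ← map_pow, ← map_mul] at hb ⊢
  rw [← RingHom.mem_ker, hker]
  refine mul_X_pow_mem_axesIdeal_of_sub_mem hm (Q := Q) ?_
  rw [← hker, RingHom.mem_ker, map_sub, hb, sub_self]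

theorem not_isPrincipalIdealRing_quotient_torsionOf [Nontrivial A] (hf : Function.Surjective f)
    (hker : RingHom.ker f = axesIdeal A (m + 1)) (hm : 2 ≤ m) :
    ¬ IsPrincipalIdealRing (R ⧸ Ideal.torsionOf R R (f (X 0) + f (X 1))) := by
  intro hPIR
  let π := (Ideal.Quotient.mk (Ideal.torsionOf R R (f (X 0) + f (X 1)))).comp f
  have hπ : Function.Surjective π := Ideal.Quotient.mk_surjective.comp hf
  have hkerπ : RingHom.ker π ≤ RingHom.ker (firstOrderJet A (Fin 2)) := by
    rw [← RingHom.comap_ker, Ideal.mk_ker, comap_torsionOf_X_add_X hker]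
    exact axesIdeal_le_ker_firstOrderJet hm
  let φ := π.liftOfSurjective hπ ⟨(firstOrderJet A (Fin 2)).toRingHom, hkerπ⟩
  have hφ : Function.Surjective φ := by
    refine Function.Surjective.of_comp (g := π) ?_
    rw [← RingHom.coe_comp, RingHom.liftOfSurjective_comp]
    exact firstOrderJet_surjective
  exact not_isPrincipalIdealRing_pi (IsPrincipalIdealRing.of_surjective φ hφ)

end

open MvPolynomial in
/-- For `R = F[X,Y]/(Xⁿ, Yⁿ, XY)` with `n ≥ 3` and `z = x + y`, one has
`Ann(z) = Rx^{n-1} ⊕ Ry^{n-1}` and `R/Ann(z)` is not a principal ideal ring. -/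
theorem ann_of_sum_and_quotient_not_pir (F : Type) [Field F] (n : ℕ) (hn : 3 ≤ n) :
    ∀ (R : Type) (_ : CommRing R)
      (f : MvPolynomial (Fin 2) F →+* R),
      Function.Surjective f →
      RingHom.ker f = Ideal.span ({(X 0 : MvPolynomial (Fin 2) F) ^ n, (X 1) ^ n,
        X 0 * X 1} : Set (MvPolynomial (Fin 2) F)) →
      ∀ x y z : R, x = f (X 0) → y = f (X 1) → z = x + y →
        Ideal.torsionOf R R z =
            Submodule.span R ({x ^ (n - 1)} : Set R) ⊔
              Submodule.span R ({y ^ (n - 1)} : Set R) ∧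
          Disjoint (Submodule.span R ({x ^ (n - 1)} : Set R))
            (Submodule.span R ({y ^ (n - 1)} : Set R)) ∧
          ¬ IsPrincipalIdealRing (R ⧸ Ideal.torsionOf R R z) := by
  rintro R _ f hf hker x y z rfl rfl rfl
  obtain ⟨m, rfl⟩ : ∃ m, n = m + 1 := ⟨n - 1, by omega⟩
  rw [Nat.add_sub_cancel]
  exact ⟨torsionOf_X_add_X hf hker, disjoint_span_X_pow hf hker (by omega),
    not_isPrincipalIdealRing_quotient_torsionOf hf hker (by omega)⟩
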